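/- Let μ be an infinite cardinal. Suppose there exist abelian groups ⟨G_X : X ⊆ μ⟩ and ⟨H^X : X ⊆ μ⟩ such that for all X, Y ⊆ μ: Ext(G_Y, H^X) = 0 if and only if Y ⊆ X. Then for every relation R ⊆ μ × μ there exist families ⟨G_α : α < μ⟩ and ⟨K_α : α < μ⟩ of abelian groups such that for all α, β < μ: Ext(G_α, K_β) = 0 if and only if α R β. -/

import Mathlib

universe u

open Cardinal

/-- `Ext(G, K) = 0`, phrased via the splitting of every short exact sequence
`0 → K → E → G → 0` of abelian groups. -/
def ExtZero (G : Type u) [AddCommGroup G] (K : Type u) [AddCommGroup K] : Prop :=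
  ∀ (E : Type u) [AddCommGroup E] (f : K →+ E) (g : E →+ G),
    Function.Injective f → Function.Surjective g → g.ker = f.range →
      ∃ s : G →+ E, ∀ x, g (s x) = x

theorem stmt7_general
    (μ : Cardinal.{u})
    -- (1): groups `G_X`, `H^X` indexed by subsets `X` of `μ` with
    -- `Ext(G_Y, H^X) = 0 ↔ Y ⊆ X`
    (G H : Set Ordinal.{u} → AddCommGrpCat.{u})
    (h1 : ∀ X ⊆ Set.Iio μ.ord, ∀ Y ⊆ Set.Iio μ.ord,
      (ExtZero ↥(G Y) ↥(H X) ↔ Y ⊆ X)) :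
    -- (2): every bipartite graph on `μ` is realized
    ∀ R : Ordinal.{u} → Ordinal.{u} → Prop,
      ∃ (G' K' : Ordinal.{u} → AddCommGrpCat.{u}),
        ∀ α < μ.ord, ∀ β < μ.ord, (ExtZero ↥(G' α) ↥(K' β) ↔ R α β) := by
  intro R
  refine ⟨fun α => G {α}, fun β => H {α' | α' < μ.ord ∧ R α' β}, fun α hα β _ => ?_⟩
  rw [h1 _ (fun _ h => h.1) _ (Set.singleton_subset_iff.2 hα), Set.singleton_subset_iff]
  exact and_iff_right hα

theorem stmt7
    (μ : Cardinal.{u}) (hμ : ℵ₀ ≤ μ)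
    -- (1): groups `G_X`, `H^X` indexed by subsets `X` of `μ` with
    -- `Ext(G_Y, H^X) = 0 ↔ Y ⊆ X`
    (G H : Set Ordinal.{u} → AddCommGrpCat.{u})
    (h1 : ∀ X ⊆ Set.Iio μ.ord, ∀ Y ⊆ Set.Iio μ.ord,
      (ExtZero ↥(G Y) ↥(H X) ↔ Y ⊆ X)) :
    -- (2): every bipartite graph on `μ` is realized
    ∀ R : Ordinal.{u} → Ordinal.{u} → Prop,
      ∃ (G' K' : Ordinal.{u} → AddCommGrpCat.{u}),
        ∀ α < μ.ord, ∀ β < μ.ord, (ExtZero ↥(G' α) ↥(K' β) ↔ R α β) :=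
  stmt7_general μ G H h1
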